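/- Let f(z₁,z₂) = (2z₁z₂ − z₁ − z₂)/(2 − z₁ − z₂). Then f maps 𝔻² into the closed unit disk, and f has non-tangential limit −1 at (1,1); however, f does not extend continuously to 𝔻̄² at (1,1): along the tangential path z_ε(t) = (1 − ε e^{it} cos t, 1 − ε e^{−it} cos t), t ∈ (0, π/2), f is constantly −1 + ε, while z_ε(t) → (1,1) as t → π/2. -/

import Mathlib

open Filter

/-- The rational inner function `(2z₁z₂ − z₁ − z₂)/(2 − z₁ − z₂)`. -/
noncomputable def f13 (z : ℂ × ℂ) : ℂ := (2 * z.1 * z.2 - z.1 - z.2) / (2 - z.1 - z.2)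

/-- The tangential path `z_ε(t) = (1 − ε e^{it} cos t, 1 − ε e^{−it} cos t)`. -/
noncomputable def path13 (ε t : ℝ) : ℂ × ℂ :=
  (1 - (ε : ℂ) * Complex.exp (Complex.I * (t : ℂ)) * ((Real.cos t : ℝ) : ℂ),
   1 - (ε : ℂ) * Complex.exp (-(Complex.I * (t : ℂ))) * ((Real.cos t : ℝ) : ℂ))

/-- A non-tangential approach region to `0` in `(RHP)²`. -/
def AR2 (c : ℝ) : Set (ℂ × ℂ) :=
  {ζ | 0 < ζ.1.re ∧ 0 < ζ.2.re ∧
    ‖ζ.1‖ ≤ c * ζ.1.re ∧ ‖ζ.2‖ ≤ c * ζ.2.re ∧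
    ‖ζ.1‖ ≤ c * ‖ζ.2‖ ∧ ‖ζ.2‖ ≤ c * ‖ζ.1‖ ∧
    ‖ζ.1‖ ≤ c * ζ.2.re ∧ ‖ζ.2‖ ≤ c * ζ.1.re}

/-!
With `ζᵢ = 1 - zᵢ`, `f = -1 + 2ζ₁ζ₂/(ζ₁ + ζ₂)`. The bound `|f| ≤ 1` on the bidisk comes from the
sum-of-squares identity `|p|² - |p̃|² = 2((1 - |z₁|²)|1 - z₂|² + (1 - |z₂|²)|1 - z₁|²)` for the
denominator `p` and numerator `p̃`. In a non-tangential region `|ζ₁| ≤ c Re ζ₁ ≤ c |ζ₁ + ζ₂|`, so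
the correction term is `O(|ζ₂|)`. Along `z_ε(t)` the pair `ζ` is `(w, w̄)` with
`w = ε cos t e^{it}`, so the correction is `|w|²/Re w = ε` while `w → 0` tangentially.
-/

open ComplexConjugate

lemma normSq_two_sub_sub_normSq_two_mul_sub_sub (a b : ℂ) :
    Complex.normSq (2 - a - b) - Complex.normSq (2 * a * b - a - b) =
      2 * ((1 - Complex.normSq a) * Complex.normSq (1 - b) +
        (1 - Complex.normSq b) * Complex.normSq (1 - a)) := by
  simp only [Complex.normSq_apply, Complex.sub_re, Complex.sub_im, Complex.mul_re,
    Complex.mul_im, Complex.re_ofNat, Complex.im_ofNat, Complex.one_re, Complex.one_im]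
  ring

lemma norm_two_mul_sub_sub_le {a b : ℂ} (ha : ‖a‖ ≤ 1) (hb : ‖b‖ ≤ 1) :
    ‖2 * a * b - a - b‖ ≤ ‖2 - a - b‖ := by
  have ha' : Complex.normSq a ≤ 1 := by
    rw [Complex.normSq_eq_norm_sq]; nlinarith [norm_nonneg a]
  have hb' : Complex.normSq b ≤ 1 := by
    rw [Complex.normSq_eq_norm_sq]; nlinarith [norm_nonneg b]
  have key := normSq_two_sub_sub_normSq_two_mul_sub_sub a b
  rw [Complex.norm_def, Complex.norm_def]
  apply Real.sqrt_le_sqrt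
  nlinarith [mul_nonneg (sub_nonneg.2 ha') (Complex.normSq_nonneg (1 - b)),
    mul_nonneg (sub_nonneg.2 hb') (Complex.normSq_nonneg (1 - a))]

lemma norm_f13_le_one {z : ℂ × ℂ} (h₁ : ‖z.1‖ ≤ 1) (h₂ : ‖z.2‖ ≤ 1) : ‖f13 z‖ ≤ 1 := by
  rw [f13, norm_div]
  exact div_le_one_of_le₀ (norm_two_mul_sub_sub_le h₁ h₂) (norm_nonneg _)

lemma f13_one_sub (ζ : ℂ × ℂ) (h : ζ.1 + ζ.2 ≠ 0) :
    f13 (1 - ζ.1, 1 - ζ.2) = -1 + 2 * (ζ.1 * ζ.2 / (ζ.1 + ζ.2)) := by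
  rw [f13, show (2 : ℂ) - (1 - ζ.1) - (1 - ζ.2) = ζ.1 + ζ.2 by ring]
  field_simp
  ring

lemma add_ne_zero_of_re_pos {ζ₁ ζ₂ : ℂ} (h₁ : 0 < ζ₁.re) (h₂ : 0 ≤ ζ₂.re) : ζ₁ + ζ₂ ≠ 0 := by
  intro h
  have := congrArg Complex.re h
  simp only [Complex.add_re, Complex.zero_re] at this
  linarith

lemma norm_mul_div_add_le {ζ₁ ζ₂ : ℂ} {c : ℝ} (h₁ : 0 < ζ₁.re) (h₂ : 0 ≤ ζ₂.re)
    (hc : ‖ζ₁‖ ≤ c * ζ₁.re) : ‖ζ₁ * ζ₂ / (ζ₁ + ζ₂)‖ ≤ c * ‖ζ₂‖ := by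
  have hc₀ : 0 ≤ c := nonneg_of_mul_nonneg_left ((norm_nonneg _).trans hc) h₁
  have hsum : ‖ζ₁‖ ≤ c * ‖ζ₁ + ζ₂‖ :=
    calc ‖ζ₁‖ ≤ c * ζ₁.re := hc
      _ ≤ c * (ζ₁ + ζ₂).re := by rw [Complex.add_re]; gcongr; linarith
      _ ≤ c * ‖ζ₁ + ζ₂‖ := by gcongr; exact Complex.re_le_norm _
  rw [norm_div, div_le_iff₀ (norm_pos_iff.2 (add_ne_zero_of_re_pos h₁ h₂)), norm_mul]
  calc ‖ζ₁‖ * ‖ζ₂‖ ≤ c * ‖ζ₁ + ζ₂‖ * ‖ζ₂‖ := by gcongr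
    _ = c * ‖ζ₂‖ * ‖ζ₁ + ζ₂‖ := by ring

lemma tendsto_mul_div_add_nhdsWithin_AR2 (c : ℝ) :
    Tendsto (fun ζ : ℂ × ℂ => ζ.1 * ζ.2 / (ζ.1 + ζ.2)) (nhdsWithin 0 (AR2 c)) (nhds 0) := by
  refine squeeze_zero_norm' (a := fun ζ : ℂ × ℂ => c * ‖ζ.2‖) ?_ ?_
  · filter_upwards [self_mem_nhdsWithin] with ζ hζ
    exact norm_mul_div_add_le hζ.1 hζ.2.1.le hζ.2.2.1
  · have : Tendsto (fun ζ : ℂ × ℂ => c * ‖ζ.2‖) (nhds 0) (nhds (c * ‖(0 : ℂ × ℂ).2‖)) :=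
      (by fun_prop : Continuous fun ζ : ℂ × ℂ => c * ‖ζ.2‖).tendsto 0
    simpa using this.mono_left nhdsWithin_le_nhds

lemma tendsto_f13_one_sub_nhdsWithin_AR2 (c : ℝ) :
    Tendsto (fun ζ : ℂ × ℂ => f13 (1 - ζ.1, 1 - ζ.2)) (nhdsWithin 0 (AR2 c)) (nhds (-1)) := by
  have hlim := (tendsto_mul_div_add_nhdsWithin_AR2 c).const_mul 2 |>.const_add (-1)
  rw [mul_zero, add_zero] at hlim
  refine hlim.congr' ?_
  filter_upwards [self_mem_nhdsWithin] with ζ hζ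
  exact (f13_one_sub ζ (add_ne_zero_of_re_pos hζ.1 hζ.2.1.le)).symm

lemma f13_one_sub_conj (w : ℂ) (hw : w.re ≠ 0) :
    f13 (1 - w, 1 - conj w) = -1 + ((‖w‖ ^ 2 / w.re : ℝ) : ℂ) := by
  have hsum : w + conj w = 2 * w.re := by rw [Complex.add_conj]; push_cast; ring
  rw [f13_one_sub (w, conj w) (by rw [hsum]; exact_mod_cast mul_ne_zero two_ne_zero hw)]
  simp only [Complex.mul_conj, hsum, Complex.normSq_eq_norm_sq]
  push_cast
  field_simp

lemma path13_eq (ε t : ℝ) :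
    path13 ε t = (1 - ((ε * Real.cos t : ℝ) : ℂ) * Complex.exp (t * Complex.I),
      1 - conj (((ε * Real.cos t : ℝ) : ℂ) * Complex.exp (t * Complex.I))) := by
  simp only [path13, map_mul, Complex.conj_ofReal, ← Complex.exp_conj, Complex.conj_I]
  push_cast
  congr 1 <;> ring_nf

lemma f13_path13 {ε t : ℝ} (hε : ε ≠ 0) (ht : Real.cos t ≠ 0) :
    f13 (path13 ε t) = -1 + ε := by
  set w : ℂ := ((ε * Real.cos t : ℝ) : ℂ) * Complex.exp (t * Complex.I)
  have hre : w.re = ε * Real.cos t * Real.cos t := by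
    rw [Complex.re_ofReal_mul, Complex.exp_ofReal_mul_I_re]
  have hnorm : ‖w‖ ^ 2 = (ε * Real.cos t) ^ 2 := by
    rw [norm_mul, Complex.norm_exp_ofReal_mul_I, Complex.norm_real, Real.norm_eq_abs, mul_one,
      sq_abs]
  rw [path13_eq, f13_one_sub_conj w (by rw [hre]; positivity), hre, hnorm]
  congr 2
  field_simp

lemma tendsto_path13 (ε : ℝ) : Tendsto (path13 ε) (nhds (Real.pi / 2)) (nhds (1, 1)) := by
  have hcont : Continuous (path13 ε) := by unfold path13; fun_prop
  simpa [path13, Real.cos_pi_div_two] using hcont.tendsto (Real.pi / 2)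

theorem stmt13 :
    (∀ z : ℂ × ℂ, ‖z.1‖ < 1 → ‖z.2‖ < 1 → ‖f13 z‖ ≤ 1) ∧
    (∀ c : ℝ, 1 < c →
      Tendsto (fun ζ : ℂ × ℂ => f13 (1 - ζ.1, 1 - ζ.2))
        (nhdsWithin 0 (AR2 c)) (nhds (-1))) ∧
    (∀ ε : ℝ, 0 < ε → ε < 1 →
      (∀ t ∈ Set.Ioo (0 : ℝ) (Real.pi / 2), f13 (path13 ε t) = -1 + (ε : ℂ)) ∧
      Tendsto (fun t => path13 ε t)
        (nhdsWithin (Real.pi / 2) (Set.Ioo (0 : ℝ) (Real.pi / 2))) (nhds (1, 1))) := by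
  refine ⟨fun z h₁ h₂ => norm_f13_le_one h₁.le h₂.le,
    fun c _ => tendsto_f13_one_sub_nhdsWithin_AR2 c, fun ε hε _ => ⟨?_, ?_⟩⟩
  · intro t ht
    have hcos : 0 < Real.cos t :=
      Real.cos_pos_of_mem_Ioo ⟨by linarith [ht.1, Real.pi_pos], ht.2⟩
    exact f13_path13 hε.ne' hcos.ne'
  · exact (tendsto_path13 ε).mono_left nhdsWithin_le_nhds
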